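/- arXiv:1910.04423 — 3 statements merged into one kernel-verified Lean document; each statement's English description precedes it below -/
import Mathlib

section
/- Let X : ℝ^n → ℝ^n be a smooth vector field and r ≥ 1 an integer; let T_ε and 𝒯_ε be the associated truncated Lie transforms of order r. Then for every z ∈ ℝ^n the map ε ↦ T_ε(𝒯_ε(z)) (which is polynomial in ε) satisfies T₀(𝒯₀(z)) = z and ∂^j/∂ε^j |_{ε=0} T_ε(𝒯_ε(z)) = 0 for all 1 ≤ j ≤ r; the same holds for ε ↦ 𝒯_ε(T_ε(z)). In other words, T_ε∘𝒯_ε = Id + O(ε^{r+1}) and 𝒯_ε∘T_ε = Id + O(ε^{r+1}) locally uniformly. -/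
open Filter
open scoped ContDiff

section aux

variable {E : Type*} [NormedAddCommGroup E] [NormedSpace ℝ E]
variable {F : Type*} [NormedAddCommGroup F] [NormedSpace ℝ F]
variable {G : Type*} [NormedAddCommGroup G] [NormedSpace ℝ G]
variable {H : Type*} [NormedAddCommGroup H] [NormedSpace ℝ H]


variable {E : Type*} [NormedAddCommGroup E] [NormedSpace ℝ E]
variable {F : Type*} [NormedAddCommGroup F] [NormedSpace ℝ F]
variable {G : Type*} [NormedAddCommGroup G] [NormedSpace ℝ G]
variable {H : Type*} [NormedAddCommGroup H] [NormedSpace ℝ H]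

noncomputable def lieD (X : E → E) (Y : E → F) : E → F := fun y => fderiv ℝ Y y (X y)

lemma lieD_contDiff {X : E → E} (hX : ContDiff ℝ ∞ X) {Y : E → F} (hY : ContDiff ℝ ∞ Y) :
    ContDiff ℝ ∞ (lieD X Y) :=
  (hY.fderiv_right (by simp)).clm_apply hX

lemma lieD_iter_contDiff {X : E → E} (hX : ContDiff ℝ ∞ X) (k : ℕ) {Y : E → F}
    (hY : ContDiff ℝ ∞ Y) : ContDiff ℝ ∞ ((lieD X)^[k] Y) := by
  induction k generalizing Y with
  | zero => exact hY
  | succ k ih => rw [Function.iterate_succ_apply]; exact ih (lieD_contDiff hX hY)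

lemma iteratedDeriv_add' {n : ℕ} {f g : ℝ → F} (hf : ContDiff ℝ ∞ f) (hg : ContDiff ℝ ∞ g)
    (x : ℝ) :
    iteratedDeriv n (fun t => f t + g t) x = iteratedDeriv n f x + iteratedDeriv n g x := by
  rw [← iteratedDerivWithin_univ, ← iteratedDerivWithin_univ, ← iteratedDerivWithin_univ]
  exact iteratedDerivWithin_add (Set.mem_univ x) uniqueDiffOn_univ
    ((hf.of_le (by exact_mod_cast le_top)).contDiffWithinAt) ((hg.of_le (by exact_mod_cast le_top)).contDiffWithinAt)

lemma iteratedDeriv_csmul {n : ℕ} {f : ℝ → F} (hf : ContDiff ℝ ∞ f) (c : ℝ) (x : ℝ) :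
    iteratedDeriv n (fun t => c • f t) x = c • iteratedDeriv n f x := by
  rw [← iteratedDerivWithin_univ, ← iteratedDerivWithin_univ]
  exact iteratedDerivWithin_const_smul (Set.mem_univ x) uniqueDiffOn_univ c
    ((hf.of_le (by exact_mod_cast le_top)).contDiffWithinAt)

lemma iteratedDeriv_fsum {ι : Type*} (s : Finset ι) (f : ι → ℝ → F)
    (hf : ∀ i ∈ s, ContDiff ℝ ∞ (f i)) (n : ℕ) (x : ℝ) :
    iteratedDeriv n (fun t => ∑ i ∈ s, f i t) x = ∑ i ∈ s, iteratedDeriv n (f i) x := by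
  induction s using Finset.cons_induction with
  | empty =>
    have hz : deriv (fun _ : ℝ => (0:F)) = fun _ => (0:F) := deriv_const' 0
    simp only [Finset.sum_empty, iteratedDeriv_eq_iterate, Function.iterate_fixed hz n]
  | cons a s ha ih =>
    rw [Finset.sum_cons]
    have h1 : ContDiff ℝ ∞ (f a) := hf a (Finset.mem_cons_self a s)
    have h2 : ∀ i ∈ s, ContDiff ℝ ∞ (f i) := fun i hi => hf i (Finset.mem_cons_of_mem hi)
    have h3 : ContDiff ℝ ∞ (fun t => ∑ i ∈ s, f i t) := ContDiff.sum fun i hi => h2 i hi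
    simp_rw [Finset.sum_cons]
    rw [iteratedDeriv_add' h1 h3 x, ih h2]

lemma iteratedDeriv_monomial_smul (i : ℕ) :
    ∀ (k : ℕ) (g : ℝ → F), ContDiff ℝ ∞ g →
    iteratedDeriv i (fun t => t ^ k • g t) 0 =
      if k ≤ i then ((i.choose k : ℝ) * k.factorial) • iteratedDeriv (i - k) g 0 else 0 := by
  induction i with
  | zero =>
    intro k g hg
    cases k with
    | zero => simp
    | succ k => simp [zero_pow]
  | succ i ih =>
    intro k g hg
    have hg' : ContDiff ℝ ∞ (deriv g) := (contDiff_infty_iff_deriv.mp hg).2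
    have hgd : Differentiable ℝ g := hg.differentiable (by simp)
    rw [iteratedDeriv_succ']
    have hderiv : deriv (fun t : ℝ => t ^ k • g t)
        = fun t => (k : ℝ) • (t ^ (k - 1) • g t) + t ^ k • deriv g t := by
      funext t
      have h1 : HasDerivAt (fun t : ℝ => t ^ k) ((k : ℝ) * t ^ (k - 1)) t := hasDerivAt_pow k t
      have h2 : HasDerivAt g (deriv g t) t := (hgd t).hasDerivAt
      have h3 := h1.smul h2
      rw [show deriv (fun t : ℝ => t ^ k • g t) t = _ from h3.deriv]
      rw [smul_smul]
      ring_nf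
      rw [add_comm]
    rw [hderiv]
    have hc0 : ContDiff ℝ ∞ (fun t : ℝ => t ^ (k - 1) • g t) := by
      have := (contDiff_id (𝕜 := ℝ) (E := ℝ) (n := ∞)).pow (k-1)
      exact this.smul hg
    have hc1 : ContDiff ℝ ∞ (fun t : ℝ => (k : ℝ) • (t ^ (k - 1) • g t)) := hc0.const_smul _
    have hc2 : ContDiff ℝ ∞ (fun t : ℝ => t ^ k • deriv g t) := by
      have := (contDiff_id (𝕜 := ℝ) (E := ℝ) (n := ∞)).pow k
      exact this.smul hg'
    rw [iteratedDeriv_add' hc1 hc2, iteratedDeriv_csmul hc0,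
      ih (k - 1) g hg, ih k (deriv g) hg']
    rcases Nat.lt_or_ge i.succ k with hki | hki
    · -- k > i+1 : everything vanishes
      rw [if_neg (by omega), if_neg (by omega), if_neg (by omega)]
      simp
    · rw [if_pos hki]
      cases k with
      | zero =>
        simp only [Nat.cast_zero, zero_smul, zero_add, if_pos (Nat.zero_le i)]
        rw [← iteratedDeriv_succ']
        simp [Nat.choose]
      | succ k =>
        simp only [Nat.succ_sub_one]
        rcases Nat.lt_or_ge i k with hik | hik
        · -- k = i + 1 exactly (since k+1 ≤ i+1 and k > i impossible unless k = i... )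
          exact absurd hik (by omega)
        · rw [if_pos hik]
          by_cases hk1 : k + 1 ≤ i
          · rw [if_pos hk1, ← iteratedDeriv_succ']
            have hidx : i - k = (i - (k+1)) + 1 := by omega
            have hidx2 : i + 1 - (k + 1) = i - k := by omega
            rw [hidx2, hidx, iteratedDeriv_succ']
            rw [smul_smul, ← add_smul]
            congr 1
            have : (i+1).choose (k+1) = i.choose k + i.choose (k+1) := Nat.choose_succ_succ i k
            push_cast [this, Nat.factorial_succ]
            ring
          · -- k = i
            have h0 : i - k = 0 := by omega
            have h1 : i + 1 - (k + 1) = 0 := by omega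
            have hk : k = i := by omega
            rw [if_neg hk1, h0, h1, add_zero, smul_smul]
            congr 1
            subst hk
            push_cast [Nat.choose_self, Nat.factorial_succ]
            ring

lemma lieD_add {X : E → E} {f g : E → F} (hf : ContDiff ℝ ∞ f) (hg : ContDiff ℝ ∞ g) :
    lieD X (fun y => f y + g y) = fun y => lieD X f y + lieD X g y := by
  funext y
  unfold lieD
  rw [fderiv_fun_add ((hf.differentiable (by simp)) y)
    ((hg.differentiable (by simp)) y)]
  simp

lemma lieD_iter_add {X : E → E} (hX : ContDiff ℝ ∞ X) (i : ℕ) {f g : E → F}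
    (hf : ContDiff ℝ ∞ f) (hg : ContDiff ℝ ∞ g) :
    (lieD X)^[i] (fun y => f y + g y) = fun y => (lieD X)^[i] f y + (lieD X)^[i] g y := by
  induction i generalizing f g with
  | zero => rfl
  | succ i ih =>
    rw [Function.iterate_succ_apply, Function.iterate_succ_apply, Function.iterate_succ_apply,
      lieD_add hf hg, ih (lieD_contDiff hX hf) (lieD_contDiff hX hg)]

lemma lieD_clm (A : F →L[ℝ] G) {X : E → E} {f : E → F} (hf : ContDiff ℝ ∞ f) :
    lieD X (fun y => A (f y)) = fun y => A (lieD X f y) := by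
  funext y
  unfold lieD
  rw [show (fun y => A (f y)) = A ∘ f from rfl,
    fderiv_comp y A.differentiableAt ((hf.differentiable (by simp)) y),
    A.fderiv]
  rfl

lemma lieD_iter_clm (A : F →L[ℝ] G) {X : E → E} (hX : ContDiff ℝ ∞ X) (i : ℕ) {f : E → F}
    (hf : ContDiff ℝ ∞ f) :
    (lieD X)^[i] (fun y => A (f y)) = fun y => A ((lieD X)^[i] f y) := by
  induction i generalizing f with
  | zero => rfl
  | succ i ih =>
    rw [Function.iterate_succ_apply, Function.iterate_succ_apply, lieD_clm A hf,
      ih (lieD_contDiff hX hf)]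

lemma lieD_bilin (B : F →L[ℝ] G →L[ℝ] H) {X : E → E} {f : E → F} {g : E → G}
    (hf : ContDiff ℝ ∞ f) (hg : ContDiff ℝ ∞ g) :
    lieD X (fun y => B (f y) (g y)) = fun y => B (lieD X f y) (g y) + B (f y) (lieD X g y) := by
  funext y
  unfold lieD
  have hf' : HasFDerivAt f (fderiv ℝ f y) y :=
    ((hf.differentiable (by simp)) y).hasFDerivAt
  have hg' : HasFDerivAt g (fderiv ℝ g y) y :=
    ((hg.differentiable (by simp)) y).hasFDerivAt
  have hc : HasFDerivAt (fun y => B (f y)) (B.comp (fderiv ℝ f y)) y :=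
    B.hasFDerivAt.comp y hf'
  have h := (hc.clm_apply hg').fderiv
  rw [h]
  simp
  abel

lemma contDiff_bilin_apply (B : F →L[ℝ] G →L[ℝ] H) {f : E → F} {g : E → G}
    (hf : ContDiff ℝ ∞ f) (hg : ContDiff ℝ ∞ g) :
    ContDiff ℝ ∞ (fun y => B (f y) (g y)) :=
  (B.contDiff.comp hf).clm_apply hg

lemma lieD_iter_bilin (B : F →L[ℝ] G →L[ℝ] H) {X : E → E} (hX : ContDiff ℝ ∞ X) (i : ℕ)
    {f : E → F} {g : E → G} (hf : ContDiff ℝ ∞ f) (hg : ContDiff ℝ ∞ g) (w : E) :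
    (lieD X)^[i] (fun y => B (f y) (g y)) w =
      ∑ k ∈ Finset.range (i + 1),
        (i.choose k : ℝ) • B ((lieD X)^[k] f w) ((lieD X)^[i - k] g w) := by
  induction i generalizing f g with
  | zero => simp
  | succ i ih =>
    rw [Function.iterate_succ_apply, lieD_bilin B hf hg,
      lieD_iter_add hX i (contDiff_bilin_apply B (lieD_contDiff hX hf) hg)
        (contDiff_bilin_apply B hf (lieD_contDiff hX hg))]
    beta_reduce
    rw [ih (lieD_contDiff hX hf) hg, ih hf (lieD_contDiff hX hg)]
    -- rewrite iterated applications
    have e1 : ∀ k : ℕ, (lieD X)^[k] (lieD X f) = (lieD X)^[k + 1] f := fun k =>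
      (Function.iterate_succ_apply (lieD X) k f).symm
    have e2 : ∀ k : ℕ, (lieD X)^[k] (lieD X g) = (lieD X)^[k + 1] g := fun k =>
      (Function.iterate_succ_apply (lieD X) k g).symm
    simp only [e1, e2]
    -- now pure binomial bookkeeping
    set a : ℕ → H := fun k => B ((lieD X)^[k] f w) ((lieD X)^[i + 1 - k] g w) with ha
    have L1 : ∑ k ∈ Finset.range (i + 1), (i.choose k : ℝ) • B ((lieD X)^[k + 1] f w)
        ((lieD X)^[i - k] g w) = ∑ k ∈ Finset.range (i + 1), (i.choose k : ℝ) • a (k + 1) := by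
      refine Finset.sum_congr rfl fun k hk => ?_
      have : i - k = i + 1 - (k + 1) := by omega
      rw [ha, this]
    have L2 : ∑ k ∈ Finset.range (i + 1), (i.choose k : ℝ) • B ((lieD X)^[k] f w)
        ((lieD X)^[i - k + 1] g w) = ∑ k ∈ Finset.range (i + 1), (i.choose k : ℝ) • a k := by
      refine Finset.sum_congr rfl fun k hk => ?_
      have hk' : k ≤ i := Nat.lt_succ_iff.mp (Finset.mem_range.mp hk)
      have : i - k + 1 = i + 1 - k := by omega
      rw [ha, this]
    rw [L1, L2]
    have R : ∑ k ∈ Finset.range (i + 2), ((i + 1).choose k : ℝ) • B ((lieD X)^[k] f w)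
        ((lieD X)^[i + 1 - k] g w) = ∑ k ∈ Finset.range (i + 2), ((i + 1).choose k : ℝ) • a k :=
      rfl
    rw [R]
    rw [Finset.sum_range_succ' (fun k => ((i + 1).choose k : ℝ) • a k)]
    have hch : ∀ k : ℕ, ((i + 1).choose (k + 1) : ℝ) = (i.choose k : ℝ) + (i.choose (k + 1) : ℝ) := by
      intro k
      push_cast [Nat.choose_succ_succ]
      ring
    have expand : ∑ k ∈ Finset.range (i + 1), ((i + 1).choose (k + 1) : ℝ) • a (k + 1)
        = ∑ k ∈ Finset.range (i + 1), ((i.choose k : ℝ) • a (k + 1)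
          + (i.choose (k + 1) : ℝ) • a (k + 1)) := by
      refine Finset.sum_congr rfl fun k hk => ?_
      rw [hch k, add_smul]
    rw [expand, Finset.sum_add_distrib]
    have shift : ∑ k ∈ Finset.range (i + 1), (i.choose (k + 1) : ℝ) • a (k + 1) + a 0
        = ∑ k ∈ Finset.range (i + 1), (i.choose k : ℝ) • a k := by
      rw [Finset.sum_range_succ (fun k => (i.choose (k + 1) : ℝ) • a (k + 1)) i]
      simp only [Nat.choose_succ_self, Nat.cast_zero, zero_smul, add_zero]
      rw [Finset.sum_range_succ' (fun k => (i.choose k : ℝ) • a k) i]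
      simp
    have hc0 : ((i+1).choose 0 : ℝ) • a 0 = a 0 := by simp
    rw [hc0]
    rw [← shift]
    abel

end aux

/-- Iterated vector fields: `X⁽⁰⁾ = X`, `X⁽ᵏ⁾(z) = dX⁽ᵏ⁻¹⁾(z)·X(z)`. -/
noncomputable def iterField {n : ℕ} (X : EuclideanSpace ℝ (Fin n) → EuclideanSpace ℝ (Fin n)) :
    ℕ → EuclideanSpace ℝ (Fin n) → EuclideanSpace ℝ (Fin n)
  | 0 => X
  | (k+1) => fun z => fderiv ℝ (iterField X k) z (X z)

/-- The truncated Lie transform of order `r` associated to `X`: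
`T_ε(z) = z + Σ_{k=0}^{r-1} (ε^{k+1}/(k+1)!) X⁽ᵏ⁾(z)`.
The map `𝒯_ε` of the paper is `truncLie X r (-ε)`. -/
noncomputable def truncLie {n : ℕ} (X : EuclideanSpace ℝ (Fin n) → EuclideanSpace ℝ (Fin n))
    (r : ℕ) (ε : ℝ) (z : EuclideanSpace ℝ (Fin n)) : EuclideanSpace ℝ (Fin n) :=
  z + ∑ k ∈ Finset.range r, (ε^(k+1) / (Nat.factorial (k+1) : ℝ)) • iterField X k z

section euclid

variable {n : ℕ} {F : Type*} [NormedAddCommGroup F] [NormedSpace ℝ F]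

local notation "EE" => EuclideanSpace ℝ (Fin n)

lemma iterField_eq (X : EE → EE) (k : ℕ) : iterField X k = (lieD X)^[k] X := by
  induction k with
  | zero => rfl
  | succ k ih =>
    funext z
    rw [Function.iterate_succ_apply']
    show fderiv ℝ (iterField X k) z (X z) = lieD X ((lieD X)^[k] X) z
    rw [ih]
    rfl

lemma iterField_contDiff {X : EE → EE} (hX : ContDiff ℝ ∞ X) (k : ℕ) :
    ContDiff ℝ ∞ (iterField X k) := by
  rw [iterField_eq]; exact lieD_iter_contDiff hX k hX

lemma truncLie_zero (X : EE → EE) (r : ℕ) (w : EE) : truncLie X r 0 w = w := by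
  simp [truncLie, zero_pow]

lemma truncLie_hasDerivAt (X : EE → EE) (r : ℕ) (w : EE) (t : ℝ) :
    HasDerivAt (fun s : ℝ => truncLie X r s w)
      (∑ k ∈ Finset.range r, (t ^ k / (k.factorial : ℝ)) • iterField X k w) t := by
  have h : ∀ k ∈ Finset.range r, HasDerivAt
      (fun s : ℝ => (s ^ (k+1) / ((k+1).factorial : ℝ)) • iterField X k w)
      ((t ^ k / (k.factorial : ℝ)) • iterField X k w) t := by
    intro k _
    have h1 : HasDerivAt (fun s : ℝ => s ^ (k+1) / ((k+1).factorial : ℝ))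
        ((((k:ℝ)+1) * t ^ k) / ((k+1).factorial : ℝ)) t := by
      have := (hasDerivAt_pow (k+1) t).div_const ((k+1).factorial : ℝ)
      simpa using this
    have h2 := h1.smul_const (iterField X k w)
    have h3 : (((k:ℝ)+1) * t ^ k) / ((k+1).factorial : ℝ) = t ^ k / (k.factorial : ℝ) := by
      have hf : (k.factorial : ℝ) ≠ 0 := Nat.cast_ne_zero.mpr (Nat.factorial_ne_zero _)
      have hk : ((k:ℝ)+1) ≠ 0 := by positivity
      rw [Nat.factorial_succ]
      push_cast
      field_simp
    rw [h3] at h2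
    exact h2
  have hsum := HasDerivAt.fun_sum h
  have hfull := (hasDerivAt_const t w).add hsum
  simpa [truncLie, Pi.add_def] using hfull

lemma truncLie_param_contDiff (X : EE → EE) (r : ℕ) (w : EE) :
    ContDiff ℝ ∞ (fun t : ℝ => truncLie X r t w) := by
  unfold truncLie
  refine ContDiff.add contDiff_const (ContDiff.sum fun k _ => ?_)
  have hp : ContDiff ℝ ∞ (fun t : ℝ => t ^ (k+1) / ((k+1).factorial : ℝ)) := by
    have := (contDiff_id (𝕜 := ℝ) (E := ℝ) (n := ∞)).pow (k+1)
    exact this.div_const _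
  exact hp.smul contDiff_const

lemma jet_lemma {X : EE → EE} (hX : ContDiff ℝ ∞ X) {r : ℕ} :
    ∀ i : ℕ, i ≤ r → ∀ Y : EE → F, ContDiff ℝ ∞ Y → ∀ w : EE,
      iteratedDeriv i (fun t => Y (truncLie X r t w)) 0 = (lieD X)^[i] Y w := by
  intro i
  induction i using Nat.strong_induction_on with
  | _ i SIH =>
    match i with
    | 0 =>
      intro _ Y hY w
      simp [truncLie_zero]
    | (m+1) =>
      intro hir Y hY w
      have hYd : Differentiable ℝ Y := hY.differentiable (by simp)
      have hfY : ContDiff ℝ ∞ (fderiv ℝ Y) := hY.fderiv_right (by simp)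
      have hTc : ContDiff ℝ ∞ (fun t : ℝ => truncLie X r t w) := truncLie_param_contDiff X r w
      rw [iteratedDeriv_succ']
      have hderiv : deriv (fun t => Y (truncLie X r t w))
          = fun t => ∑ k ∈ Finset.range r, (1 / (k.factorial : ℝ)) •
              (t ^ k • (fderiv ℝ Y (truncLie X r t w)) (iterField X k w)) := by
        funext t
        have hT := truncLie_hasDerivAt X r w t
        have hYf : HasFDerivAt Y (fderiv ℝ Y (truncLie X r t w)) (truncLie X r t w) :=
          (hYd _).hasFDerivAt
        have hcomp := hYf.comp_hasDerivAt t hT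
        simp only [Function.comp_def] at hcomp
        rw [hcomp.deriv, map_sum]
        refine Finset.sum_congr rfl fun k _ => ?_
        rw [ContinuousLinearMap.map_smul, smul_smul]
        congr 1
        ring
      rw [hderiv]
      have hZ : ∀ k : ℕ, ContDiff ℝ ∞
          (fun t : ℝ => (fderiv ℝ Y (truncLie X r t w)) (iterField X k w)) :=
        fun k => (hfY.comp hTc).clm_apply contDiff_const
      have hZm : ∀ k : ℕ, ContDiff ℝ ∞
          (fun t : ℝ => t ^ k • (fderiv ℝ Y (truncLie X r t w)) (iterField X k w)) := by
        intro k
        have := (contDiff_id (𝕜 := ℝ) (E := ℝ) (n := ∞)).pow k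
        exact this.smul (hZ k)
      have hterm : ∀ k ∈ Finset.range r, ContDiff ℝ ∞ (fun t : ℝ => (1 / (k.factorial : ℝ)) •
          (t ^ k • (fderiv ℝ Y (truncLie X r t w)) (iterField X k w))) :=
        fun k _ => (hZm k).const_smul _
      rw [iteratedDeriv_fsum _ _ hterm]
      have hval : ∀ k ∈ Finset.range r,
          iteratedDeriv m (fun t : ℝ => (1 / (k.factorial : ℝ)) •
            (t ^ k • (fderiv ℝ Y (truncLie X r t w)) (iterField X k w))) 0
          = if k ≤ m then (m.choose k : ℝ) •
              ((lieD X)^[m - k] (fun y => (fderiv ℝ Y y) (iterField X k w)) w) else 0 := by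
        intro k hk
        rw [iteratedDeriv_csmul (hZm k), iteratedDeriv_monomial_smul m k _ (hZ k)]
        by_cases hkm : k ≤ m
        · rw [if_pos hkm, if_pos hkm]
          have hY' : ContDiff ℝ ∞ (fun y : EE => (fderiv ℝ Y y) (iterField X k w)) :=
            hfY.clm_apply contDiff_const
          rw [SIH (m - k) (by omega) (by omega) _ hY' w]
          rw [smul_smul]
          congr 1
          have hf : (k.factorial : ℝ) ≠ 0 := Nat.cast_ne_zero.mpr (Nat.factorial_ne_zero _)
          field_simp
        · rw [if_neg hkm, if_neg hkm, smul_zero]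
      rw [Finset.sum_congr rfl hval]
      have hsub : (∑ k ∈ Finset.range r, if k ≤ m then (m.choose k : ℝ) •
            ((lieD X)^[m - k] (fun y => (fderiv ℝ Y y) (iterField X k w)) w) else 0)
          = ∑ k ∈ Finset.range (m+1), (m.choose k : ℝ) •
            ((lieD X)^[m - k] (fun y => (fderiv ℝ Y y) (iterField X k w)) w) := by
        rw [← Finset.sum_subset (Finset.range_subset_range.mpr (show m+1 ≤ r by omega))
          (fun x _ hx => by
            rw [if_neg]
            have := Finset.mem_range.not.mp hx
            omega)]
        refine Finset.sum_congr rfl fun k hk => ?_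
        rw [if_pos (Nat.lt_succ_iff.mp (Finset.mem_range.mp hk))]
      rw [hsub, Function.iterate_succ_apply]
      have hLY : lieD X Y
          = fun y => (ContinuousLinearMap.id ℝ (EE →L[ℝ] F)) (fderiv ℝ Y y) (X y) := rfl
      rw [hLY, lieD_iter_bilin (ContinuousLinearMap.id ℝ (EE →L[ℝ] F)) hX m hfY hX w,
        ← Finset.sum_range_reflect]
      refine Finset.sum_congr rfl fun k hk => ?_
      have hk' : k ≤ m := Nat.lt_succ_iff.mp (Finset.mem_range.mp hk)
      have e0 : m + 1 - 1 - k = m - k := by omega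
      have e1 : m - (m - k) = k := by omega
      rw [e0, e1, Nat.choose_symm hk']
      congr 1
      have hZA : (fun y : EE => (fderiv ℝ Y y) (iterField X (m - k) w))
          = fun y => (ContinuousLinearMap.apply ℝ F (iterField X (m - k) w)) (fderiv ℝ Y y) := rfl
      rw [hZA, lieD_iter_clm (ContinuousLinearMap.apply ℝ F (iterField X (m - k) w)) hX k hfY]
      simp only [ContinuousLinearMap.apply_apply, ContinuousLinearMap.id_apply]
      rw [← iterField_eq]

lemma lieD_id (X : EE → EE) : lieD X (fun y : EE => y) = X := by
  funext y
  show fderiv ℝ (fun y : EE => y) y (X y) = X y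
  rw [fderiv_id']
  rfl

lemma lieD_iter_id (X : EE → EE) (m : ℕ) :
    (lieD X)^[m + 1] (fun y : EE => y) = iterField X m := by
  rw [Function.iterate_succ_apply, lieD_id, iterField_eq]

lemma lieD_iter_iterField (X : EE → EE) (m k : ℕ) :
    (lieD X)^[m] (iterField X k) = iterField X (m + k) := by
  rw [iterField_eq X k, ← Function.iterate_add_apply, ← iterField_eq]

end euclid

/-- **The truncated Lie transforms are mutually inverse up to order `ε^{r+1}`.**
For a smooth vector field `X` and `r ≥ 1`, the polynomial map `ε ↦ T_ε(𝒯_ε(z))` equals `z`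
at `ε = 0` and has vanishing derivatives at `ε = 0` up to order `r`, and likewise for
`ε ↦ 𝒯_ε(T_ε(z))`; i.e. `T_ε∘𝒯_ε = Id + O(ε^{r+1})` and `𝒯_ε∘T_ε = Id + O(ε^{r+1})`. -/
theorem truncLie_approx_inverse (n : ℕ)
    (X : EuclideanSpace ℝ (Fin n) → EuclideanSpace ℝ (Fin n)) (hX : ContDiff ℝ (⊤ : ℕ∞) X)
    (r : ℕ) (hr : 1 ≤ r) (z : EuclideanSpace ℝ (Fin n)) :
    (truncLie X r 0 (truncLie X r (-0) z) = z) ∧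
    (∀ j : ℕ, 1 ≤ j → j ≤ r →
      iteratedDeriv j (fun ε : ℝ => truncLie X r ε (truncLie X r (-ε) z)) 0 = 0) ∧
    (truncLie X r (-0) (truncLie X r 0 z) = z) ∧
    (∀ j : ℕ, 1 ≤ j → j ≤ r →
      iteratedDeriv j (fun ε : ℝ => truncLie X r (-ε) (truncLie X r ε z)) 0 = 0) := by
  have hX' : ContDiff ℝ ∞ X := hX.of_le (by simp)
  have hhc : ContDiff ℝ ∞ (fun ε : ℝ => truncLie X r (-ε) z) :=
    (truncLie_param_contDiff X r z).comp (contDiff_id.neg)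
  have main : ∀ j : ℕ, 1 ≤ j → j ≤ r →
      iteratedDeriv j (fun ε : ℝ => truncLie X r ε (truncLie X r (-ε) z)) 0 = 0 := by
    intro j hj1 hjr
    have hfun : (fun ε : ℝ => truncLie X r ε (truncLie X r (-ε) z))
        = fun ε => truncLie X r (-ε) z + ∑ k ∈ Finset.range r,
            (1 / ((k+1).factorial : ℝ)) • (ε ^ (k+1) • iterField X k (truncLie X r (-ε) z)) := by
      funext ε
      show truncLie X r ε (truncLie X r (-ε) z) = _
      rw [truncLie]
      congr 1
      refine Finset.sum_congr rfl fun k _ => ?_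
      rw [smul_smul]
      congr 1
      ring
    have htermc : ∀ k ∈ Finset.range r, ContDiff ℝ ∞ (fun ε : ℝ =>
        (1 / ((k+1).factorial : ℝ)) • (ε ^ (k+1) • iterField X k (truncLie X r (-ε) z))) := by
      intro k _
      have hp := (contDiff_id (𝕜 := ℝ) (E := ℝ) (n := ∞)).pow (k+1)
      exact (hp.smul ((iterField_contDiff hX' k).comp hhc)).const_smul _
    rw [hfun, iteratedDeriv_add' hhc (ContDiff.sum htermc), iteratedDeriv_fsum _ _ htermc]
    obtain ⟨m, rfl⟩ : ∃ m, j = m + 1 := ⟨j - 1, by omega⟩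
    -- the head term
    have hA : iteratedDeriv (m+1) (fun ε : ℝ => truncLie X r (-ε) z) 0
        = ((-1:ℝ)^(m+1)) • iterField X m z := by
      have hcn := iteratedDeriv_comp_neg (m+1) (fun t : ℝ => truncLie X r t z) 0
      beta_reduce at hcn
      rw [neg_zero] at hcn
      rw [hcn, jet_lemma hX' (m+1) hjr (fun y => y) contDiff_id z, lieD_iter_id]
    rw [hA]
    -- the sum terms
    have hBval : ∀ k ∈ Finset.range r,
        iteratedDeriv (m+1) (fun ε : ℝ =>
          (1 / ((k+1).factorial : ℝ)) • (ε ^ (k+1) • iterField X k (truncLie X r (-ε) z))) 0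
        = if k + 1 ≤ m + 1 then
            (((m+1).choose (k+1) : ℝ) * (-1:ℝ)^(m + 1 - (k+1))) • iterField X m z else 0 := by
      intro k hk
      have hg : ContDiff ℝ ∞ (fun ε : ℝ => iterField X k (truncLie X r (-ε) z)) :=
        (iterField_contDiff hX' k).comp hhc
      have hps : ContDiff ℝ ∞ (fun ε : ℝ => ε ^ (k+1) • iterField X k (truncLie X r (-ε) z)) := by
        have hp := (contDiff_id (𝕜 := ℝ) (E := ℝ) (n := ∞)).pow (k+1)
        exact hp.smul hg
      rw [iteratedDeriv_csmul hps, iteratedDeriv_monomial_smul (m+1) (k+1) _ hg]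
      by_cases hkj : k + 1 ≤ m + 1
      · rw [if_pos hkj, if_pos hkj]
        have hcn := iteratedDeriv_comp_neg (m + 1 - (k+1))
          (fun t : ℝ => iterField X k (truncLie X r t z)) 0
        beta_reduce at hcn
        rw [neg_zero] at hcn
        rw [hcn, jet_lemma hX' (m + 1 - (k+1)) (by omega) (iterField X k)
          (iterField_contDiff hX' k) z, lieD_iter_iterField]
        have hidx : m + 1 - (k+1) + k = m := by omega
        rw [hidx, smul_smul, smul_smul]
        congr 1
        have hf : (((k+1).factorial : ℝ)) ≠ 0 := Nat.cast_ne_zero.mpr (Nat.factorial_ne_zero _)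
        field_simp
      · rw [if_neg hkj, if_neg hkj, smul_zero]
    rw [Finset.sum_congr rfl hBval]
    have hsub : (∑ k ∈ Finset.range r, if k + 1 ≤ m + 1 then
          (((m+1).choose (k+1) : ℝ) * (-1:ℝ)^(m + 1 - (k+1))) • iterField X m z else 0)
        = ∑ k ∈ Finset.range (m+1),
          (((m+1).choose (k+1) : ℝ) * (-1:ℝ)^(m + 1 - (k+1))) • iterField X m z := by
      rw [← Finset.sum_subset (Finset.range_subset_range.mpr (show m + 1 ≤ r by omega))
        (fun x _ hx => by
          rw [if_neg]
          simp only [Finset.mem_range, not_lt] at hx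
          omega)]
      exact Finset.sum_congr rfl fun k hk =>
        if_pos (by have := Finset.mem_range.mp hk; omega)
    rw [hsub, ← Finset.sum_smul, ← add_smul]
    have hcoef : ((-1:ℝ))^(m+1) + ∑ k ∈ Finset.range (m+1),
        (((m+1).choose (k+1) : ℝ) * (-1:ℝ)^(m + 1 - (k+1))) = 0 := by
      have hb : (0:ℝ) = ∑ i ∈ Finset.range (m+1+1),
          (1:ℝ)^i * (-1:ℝ)^(m+1-i) * ((m+1).choose i : ℝ) := by
        rw [← add_pow]
        norm_num
      rw [Finset.sum_range_succ'] at hb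
      simp only [one_pow, one_mul, Nat.choose_zero_right, Nat.cast_one, mul_one,
        Nat.sub_zero] at hb
      have hms : ∑ k ∈ Finset.range (m+1),
          (((m+1).choose (k+1) : ℝ) * (-1:ℝ)^(m + 1 - (k+1)))
          = ∑ k ∈ Finset.range (m+1), ((-1:ℝ)^(m + 1 - (k+1)) * ((m+1).choose (k+1) : ℝ)) :=
        Finset.sum_congr rfl fun k _ => mul_comm _ _
      rw [hms]
      linarith [hb]
    rw [hcoef, zero_smul]
  refine ⟨by rw [neg_zero, truncLie_zero, truncLie_zero], main,
    by rw [neg_zero, truncLie_zero, truncLie_zero], ?_⟩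
  intro j hj1 hjr
  have hcn := iteratedDeriv_comp_neg j
    (fun ε : ℝ => truncLie X r ε (truncLie X r (-ε) z)) 0
  beta_reduce at hcn
  rw [neg_zero] at hcn
  have heq : (fun x : ℝ => truncLie X r (-x) (truncLie X r (- -x) z))
      = fun x : ℝ => truncLie X r (-x) (truncLie X r x z) := by
    funext x
    rw [neg_neg]
  rw [heq] at hcn
  rw [hcn, main j hj1 hjr, smul_zero]
end

section
/- (Homological equation along a non-periodic flow.) Let J be an invertible skew-symmetric 2n×2n real matrix, let H₀ : ℝ^{2n} → ℝ be C² such that the flow Φ^t of ż = J∇H₀(z) is globally defined, and let W : ℝ^{2n} → ℝ be continuous. Let z₀ ∈ ℝ^{2n} be such that τ ↦ W(Φ^τ(z₀)) is integrable on ℝ and lim_{τ→+∞} ( W(Φ^{−τ}(z₀)) + W(Φ^{τ}(z₀)) ) = 0. Define g(t) := −(1/2)∫_ℝ sgn(τ) W(Φ^{τ+t}(z₀)) dτ. Then g is differentiable at t = 0 with g'(0) = W(z₀). Equivalently, the function G(z) := −(1/2)∫_ℝ sgn(τ) W(Φ^{τ}(z)) dτ satisfies (d/dt)|_{t=0} G(Φ^t(z₀))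 = W(z₀), i.e. G solves the homological equation {H₀, G} + W = 0 at z₀, where {H₀, G}(z₀) is understood as −(d/dt)|_{t=0} G(Φ^t(z₀)). -/
open MeasureTheory Filter
open scoped RealInnerProductSpace Matrix

/-- The Poisson tensor `J` acting as a continuous linear map on `ℝ^{2n}`. -/
noncomputable def poissonCLM {m : ℕ} (J : Matrix (Fin m) (Fin m) ℝ) :
    EuclideanSpace ℝ (Fin m) →L[ℝ] EuclideanSpace ℝ (Fin m) :=
  Matrix.toEuclideanCLM (𝕜 := ℝ) J

open Set

/-!
Substituting `σ = τ + t`, the kernel `sign (σ - t)` splits `∫ sign (σ - t) f(σ) dσ` into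
`∫_{σ > t} f - ∫_{σ < t} f = ∫ f - 2 ∫_{σ ≤ t} f`. Hence `g(t) = ∫_{σ ≤ t} f - ½ ∫ f` for
`f(σ) = W(Φ^σ(z₀))`, and the fundamental theorem of calculus gives `g'(0) = f(0) = W(z₀)`.
-/

theorem Real.sign_sub_smul_eq_indicator_sub_indicator {E : Type*} [AddCommGroup E] [Module ℝ E]
    (f : ℝ → E) (t σ : ℝ) :
    Real.sign (σ - t) • f σ = (Ioi t).indicator f σ - (Iio t).indicator f σ := by
  rcases lt_trichotomy σ t with h | rfl | h
  · simp [Real.sign_of_neg (sub_neg.mpr h), h, h.not_gt]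
  · simp
  · simp [Real.sign_of_pos (sub_pos.mpr h), h, h.not_gt]

section SignKernel

variable {E : Type*} [NormedAddCommGroup E] [NormedSpace ℝ E] {f : ℝ → E}

theorem integral_sign_sub_smul (hf : Integrable f) (t : ℝ) :
    ∫ σ, Real.sign (σ - t) • f σ = (∫ σ, f σ) - (2 : ℝ) • ∫ σ in Iic t, f σ := by
  have hIoi : ∫ σ in Ioi t, f σ = (∫ σ, f σ) - ∫ σ in Iic t, f σ := by
    rw [← integral_add_compl measurableSet_Iic hf, compl_Iic, add_sub_cancel_left]
  simp_rw [Real.sign_sub_smul_eq_indicator_sub_indicator f t]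
  rw [integral_sub (hf.indicator measurableSet_Ioi) (hf.indicator measurableSet_Iio),
    integral_indicator measurableSet_Ioi, integral_indicator measurableSet_Iio,
    ← integral_Iic_eq_integral_Iio, hIoi, two_smul]
  abel

theorem hasDerivAt_integral_Iic [CompleteSpace E] (hf : Integrable f) {a : ℝ}
    (ha : ContinuousAt f a) :
    HasDerivAt (fun t => ∫ σ in Iic t, f σ) (f a) a := by
  have hFTC : HasDerivAt (fun t => ∫ σ in a..t, f σ) (f a) a :=
    intervalIntegral.integral_hasDerivAt_right hf.intervalIntegrable
      hf.aestronglyMeasurable.stronglyMeasurableAtFilter ha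
  have hsplit :
      (fun t => ∫ σ in Iic t, f σ) = fun t => (∫ σ in Iic a, f σ) + ∫ σ in a..t, f σ := by
    ext t
    rw [← intervalIntegral.integral_Iic_sub_Iic hf.integrableOn hf.integrableOn,
      add_sub_cancel]
  rw [hsplit]
  exact hFTC.const_add _

theorem hasDerivAt_neg_half_integral_sign_smul_comp_add [CompleteSpace E] (hf : Integrable f)
    {a : ℝ} (ha : ContinuousAt f a) :
    HasDerivAt (fun t => -(1 / 2 : ℝ) • ∫ τ, Real.sign τ • f (τ + t)) (f a) a := by
  have hshift (t : ℝ) : ∫ τ, Real.sign τ • f (τ + t) = ∫ σ, Real.sign (σ - t) • f σ := by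
    simpa using integral_add_right_eq_self (fun σ => Real.sign (σ - t) • f σ) t
  have hform : (fun t => -(1 / 2 : ℝ) • ∫ τ, Real.sign τ • f (τ + t)) =
      fun t => (∫ σ in Iic t, f σ) - (1 / 2 : ℝ) • ∫ σ, f σ := by
    ext t
    rw [hshift, integral_sign_sub_smul hf, smul_sub, smul_smul]
    norm_num
    abel
  rw [hform]
  exact (hasDerivAt_integral_Iic hf ha).sub_const _

end SignKernel

theorem homological_equation_nonperiodic_general (n : ℕ)
    (J : Matrix (Fin (2*n)) (Fin (2*n)) ℝ)
    (H0 : EuclideanSpace ℝ (Fin (2*n)) → ℝ)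
    (Φ : ℝ → EuclideanSpace ℝ (Fin (2*n)) → EuclideanSpace ℝ (Fin (2*n)))
    (hΦ0 : ∀ z, Φ 0 z = z)
    (hΦode : ∀ t z, HasDerivAt (fun τ => Φ τ z) (poissonCLM J (gradient H0 (Φ t z))) t)
    (W : EuclideanSpace ℝ (Fin (2*n)) → ℝ) (hW : Continuous W)
    (z₀ : EuclideanSpace ℝ (Fin (2*n)))
    (hint : Integrable (fun τ : ℝ => W (Φ τ z₀))) :
    HasDerivAt (fun t : ℝ => -(1/2) * ∫ τ : ℝ, Real.sign τ * W (Φ (τ + t) z₀))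
      (W z₀) 0 := by
  have hcont : ContinuousAt (fun σ => W (Φ σ z₀)) 0 :=
    hW.continuousAt.comp (hΦode 0 z₀).continuousAt
  simpa [smul_eq_mul, hΦ0] using hasDerivAt_neg_half_integral_sign_smul_comp_add hint hcont

/-- **Homological equation along a non-periodic flow.**
Let `Φ` be the globally defined flow of `ż = J∇H₀(z)`, `W` continuous, and `z₀` a point such
that `τ ↦ W(Φ^τ(z₀))` is integrable on `ℝ` and `W(Φ^{−τ}(z₀)) + W(Φ^{τ}(z₀)) → 0` as
`τ → +∞`. Then `g(t) := −(1/2)∫_ℝ sgn(τ) W(Φ^{τ+t}(z₀)) dτ` is differentiable at `t = 0`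
with `g'(0) = W(z₀)`; i.e. `G(z) := −(1/2)∫ sgn(τ) W(Φ^τ(z)) dτ` solves the homological
equation `{H₀, G} + W = 0` at `z₀`, there `{H₀,G}(z₀) = −(d/dt)|₀ G(Φ^t(z₀))`. -/
theorem homological_equation_nonperiodic (n : ℕ)
    (J : Matrix (Fin (2*n)) (Fin (2*n)) ℝ) (hJinv : IsUnit J) (hJskew : Jᵀ = -J)
    (H0 : EuclideanSpace ℝ (Fin (2*n)) → ℝ) (hH0 : ContDiff ℝ 2 H0)
    (Φ : ℝ → EuclideanSpace ℝ (Fin (2*n)) → EuclideanSpace ℝ (Fin (2*n)))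
    (hΦ0 : ∀ z, Φ 0 z = z)
    (hΦgroup : ∀ t s z, Φ (t + s) z = Φ t (Φ s z))
    (hΦode : ∀ t z, HasDerivAt (fun τ => Φ τ z) (poissonCLM J (gradient H0 (Φ t z))) t)
    (W : EuclideanSpace ℝ (Fin (2*n)) → ℝ) (hW : Continuous W)
    (z₀ : EuclideanSpace ℝ (Fin (2*n)))
    (hint : Integrable (fun τ : ℝ => W (Φ τ z₀)))
    (hlim : Tendsto (fun τ : ℝ => W (Φ (-τ) z₀) + W (Φ τ z₀)) atTop (nhds 0)) :
    HasDerivAt (fun t : ℝ => -(1/2) * ∫ τ : ℝ, Real.sign τ * W (Φ (τ + t) z₀))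
      (W z₀) 0 :=
  homological_equation_nonperiodic_general n J H0 Φ hΦ0 hΦode W hW z₀ hint
end

section
/- For all f, g ∈ L¹(ℝ), the function (τ, y) ↦ sgn(τ) f(y − τ) g(y + τ) is integrable on ℝ², and −(1/2)∫_ℝ sgn(τ) (∫_ℝ f(y − τ) g(y + τ) dy) dτ = −(1/4)∫_{ℝ²} sgn(y₂ − y₁) f(y₁) g(y₂) dy₁ dy₂ = −(1/2)∫_ℝ (∂⁻¹f)(y) g(y) dy. -/
open MeasureTheory Filter

/-!
The linear substitution `(τ, y) ↦ (y − τ, y + τ)` has determinant `−2`, so it pushes Lebesgue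
measure on `ℝ²` forward to `2⁻¹ •` Lebesgue measure; it carries `sgn(τ) f(y − τ) g(y + τ)` to
`sgn(y₂ − y₁) f(y₁) g(y₂)`, which is integrable as a bounded multiple of `f ⊗ g`. This gives
integrability and the first equality. For the second, integrate first in `y₁`:
`∫ sgn(y₂ − y₁) f(y₁) dy₁ = ∫_{y₁ < y₂} f − ∫_{y₁ > y₂} f = 2 (∂⁻¹f)(y₂)`.
-/

/-- The antiderivative operator
`(∂⁻¹u)(y) := (1/2)(∫_{−∞}^{y} u − ∫_{y}^{+∞} u)`. -/
noncomputable def Dinv (u : ℝ → ℝ) (y : ℝ) : ℝ :=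
  (1/2) * ((∫ x in Set.Iic y, u x) - (∫ x in Set.Ici y, u x))

theorem Real.measurable_sign : Measurable Real.sign :=
  Measurable.ite (measurableSet_lt measurable_id measurable_const) measurable_const
    (Measurable.ite (measurableSet_lt measurable_const measurable_id) measurable_const
      measurable_const)

theorem Real.norm_sign_le_one (x : ℝ) : ‖Real.sign x‖ ≤ 1 := by
  rcases Real.sign_apply_eq x with h | h | h <;> simp [h]

theorem Real.sign_mul_of_pos {c : ℝ} (hc : 0 < c) (x : ℝ) : Real.sign (c * x) = Real.sign x := by
  rcases lt_trichotomy x 0 with h | rfl | h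
  · rw [Real.sign_of_neg h, Real.sign_of_neg (mul_neg_of_pos_of_neg hc h)]
  · simp
  · rw [Real.sign_of_pos h, Real.sign_of_pos (mul_pos hc h)]

theorem MeasureTheory.Integrable.sign_mul {α : Type*} [MeasurableSpace α] {μ : Measure α}
    {φ h : α → ℝ} (hφ : Integrable φ μ) (hh : AEMeasurable h μ) :
    Integrable (fun x => Real.sign (h x) * φ x) μ :=
  hφ.bdd_mul (Real.measurable_sign.comp_aemeasurable hh).aestronglyMeasurable
    (Eventually.of_forall fun _ => Real.norm_sign_le_one _)

noncomputable def diffSumEquiv : ℝ × ℝ ≃ᵐ ℝ × ℝ where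
  toFun p := (p.2 - p.1, p.2 + p.1)
  invFun q := ((q.2 - q.1) / 2, (q.1 + q.2) / 2)
  left_inv p := by ext <;> simp only <;> ring
  right_inv q := by ext <;> simp only <;> ring
  measurable_toFun := by
    change Measurable fun p : ℝ × ℝ => (p.2 - p.1, p.2 + p.1)
    fun_prop
  measurable_invFun := by
    change Measurable fun q : ℝ × ℝ => ((q.2 - q.1) / 2, (q.1 + q.2) / 2)
    fun_prop

theorem map_diffSumEquiv_volume :
    Measure.map diffSumEquiv volume = ENNReal.ofReal 2⁻¹ • (volume : Measure (ℝ × ℝ)) := by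
  have h : ⇑diffSumEquiv =
      Matrix.toLin (Module.Basis.finTwoProd ℝ) (Module.Basis.finTwoProd ℝ) !![-1, 1; 1, 1] := by
    ext p <;> simp [diffSumEquiv] <;> ring
  rw [h, Measure.map_linearMap_addHaar_eq_smul_addHaar _ (by simp [LinearMap.det_toLin]; norm_num)]
  norm_num [LinearMap.det_toLin]

theorem integral_comp_sub_add {E : Type*} [NormedAddCommGroup E] [NormedSpace ℝ E] (F : ℝ × ℝ → E) :
    ∫ p : ℝ × ℝ, F (p.2 - p.1, p.2 + p.1) = (2⁻¹ : ℝ) • ∫ p, F p :=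
  calc ∫ p, F (diffSumEquiv p) = ∫ p, F p ∂(Measure.map diffSumEquiv volume) :=
        (diffSumEquiv.measurableEmbedding.integral_map F).symm
    _ = (2⁻¹ : ℝ) • ∫ p, F p := by
        rw [map_diffSumEquiv_volume, integral_smul_measure]; norm_num

theorem integrable_comp_sub_add_iff {E : Type*} [NormedAddCommGroup E] {F : ℝ × ℝ → E} :
    Integrable (fun p : ℝ × ℝ => F (p.2 - p.1, p.2 + p.1)) ↔ Integrable F :=
  calc Integrable (F ∘ diffSumEquiv) volume ↔ Integrable F (Measure.map diffSumEquiv volume) :=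
        diffSumEquiv.measurableEmbedding.integrable_map_iff.symm
    _ ↔ Integrable F volume := by
        rw [map_diffSumEquiv_volume]
        exact integrable_smul_measure (by norm_num) ENNReal.ofReal_ne_top

theorem integral_sign_sub_mul_eq_two_mul_Dinv {f : ℝ → ℝ} (hf : Integrable f) (b : ℝ) :
    ∫ x, Real.sign (b - x) * f x = 2 * Dinv f b := by
  have hint : Integrable (fun x => Real.sign (b - x) * f x) :=
    hf.sign_mul (measurable_const.sub measurable_id).aemeasurable
  have below : ∫ x in Set.Iio b, Real.sign (b - x) * f x = ∫ x in Set.Iic b, f x := by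
    rw [setIntegral_congr_set (Iio_ae_eq_Iic (μ := volume) (a := b)).symm]
    refine setIntegral_congr_fun measurableSet_Iio fun x hx => ?_
    rw [Real.sign_of_pos (sub_pos.mpr hx), one_mul]
  have above : ∫ x in Set.Ici b, Real.sign (b - x) * f x = -∫ x in Set.Ici b, f x := by
    have hIoi := (Ioi_ae_eq_Ici (μ := volume) (a := b)).symm
    rw [← integral_neg, setIntegral_congr_set hIoi, setIntegral_congr_set hIoi]
    refine setIntegral_congr_fun measurableSet_Ioi fun x hx => ?_
    rw [Real.sign_of_neg (sub_neg.mpr hx), neg_one_mul]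
  rw [← intervalIntegral.integral_Iio_add_Ici hint.integrableOn hint.integrableOn, below, above,
    Dinv]
  ring

theorem integrable_sign_mul_comp_sub_add {f g : ℝ → ℝ} (hf : Integrable f) (hg : Integrable g) :
    Integrable (fun p : ℝ × ℝ => Real.sign p.1 * (f (p.2 - p.1) * g (p.2 + p.1))) :=
  ((integrable_comp_sub_add_iff (F := fun q : ℝ × ℝ => f q.1 * g q.2)).2
    (hf.mul_prod hg)).sign_mul measurable_fst.aemeasurable

theorem integral_sign_sub_mul_mul_eq_two_mul_integral_sign_mul
    {f g : ℝ → ℝ} (hf : Integrable f) (hg : Integrable g) :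
    ∫ p : ℝ × ℝ, Real.sign (p.2 - p.1) * f p.1 * g p.2 =
      2 * ∫ τ, Real.sign τ * ∫ y, f (y - τ) * g (y + τ) :=
  calc ∫ p : ℝ × ℝ, Real.sign (p.2 - p.1) * f p.1 * g p.2
      = 2 * ∫ p : ℝ × ℝ,
          Real.sign ((p.2 + p.1) - (p.2 - p.1)) * f (p.2 - p.1) * g (p.2 + p.1) := by
        rw [integral_comp_sub_add (fun q : ℝ × ℝ => Real.sign (q.2 - q.1) * f q.1 * g q.2),
          smul_eq_mul]
        ring
    _ = 2 * ∫ p : ℝ × ℝ, Real.sign p.1 * (f (p.2 - p.1) * g (p.2 + p.1)) := by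
        congr 2 with p
        rw [show p.2 + p.1 - (p.2 - p.1) = 2 * p.1 by ring, Real.sign_mul_of_pos two_pos,
          mul_assoc]
    _ = 2 * ∫ τ, Real.sign τ * ∫ y, f (y - τ) * g (y + τ) := by
        rw [Measure.volume_eq_prod, integral_prod _ (integrable_sign_mul_comp_sub_add hf hg)]
        simp_rw [integral_const_mul]

theorem integral_sign_sub_mul_mul_eq_two_mul_integral_Dinv_mul
    {f g : ℝ → ℝ} (hf : Integrable f) (hg : Integrable g) :
    ∫ p : ℝ × ℝ, Real.sign (p.2 - p.1) * f p.1 * g p.2 = 2 * ∫ y, Dinv f y * g y := by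
  have hint : Integrable (fun p : ℝ × ℝ => Real.sign (p.2 - p.1) * f p.1 * g p.2)
      (volume.prod volume) := by
    simpa only [mul_assoc] using (hf.mul_prod hg).sign_mul (by fun_prop)
  rw [Measure.volume_eq_prod, integral_prod_symm _ hint, ← integral_const_mul]
  congr 1 with y
  dsimp only
  rw [integral_mul_const, integral_sign_sub_mul_eq_two_mul_Dinv hf, mul_assoc]

/-- **Explicit formula for the solution of the homological equation.**
For `f, g ∈ L¹(ℝ)`, the function `(τ, y) ↦ sgn(τ) f(y−τ) g(y+τ)` is integrable on `ℝ²`, and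
`−(1/2)∫ sgn(τ) (∫ f(y−τ)g(y+τ) dy) dτ = −(1/4)∫∫ sgn(y₂−y₁) f(y₁) g(y₂) dy₁ dy₂
  = −(1/2)∫ (∂⁻¹f)(y) g(y) dy`. -/
theorem homological_integral_formula (f g : ℝ → ℝ)
    (hf : Integrable f) (hg : Integrable g) :
    Integrable (fun p : ℝ × ℝ => Real.sign p.1 * (f (p.2 - p.1) * g (p.2 + p.1))) ∧
    (-(1/2) * ∫ τ : ℝ, Real.sign τ * ∫ y : ℝ, f (y - τ) * g (y + τ)) =
      (-(1/4) * ∫ p : ℝ × ℝ, Real.sign (p.2 - p.1) * f p.1 * g p.2) ∧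
    (-(1/4) * ∫ p : ℝ × ℝ, Real.sign (p.2 - p.1) * f p.1 * g p.2) =
      (-(1/2) * ∫ y : ℝ, Dinv f y * g y) := by
  refine ⟨integrable_sign_mul_comp_sub_add hf hg, ?_, ?_⟩
  · rw [integral_sign_sub_mul_mul_eq_two_mul_integral_sign_mul hf hg]
    ring
  · rw [integral_sign_sub_mul_mul_eq_two_mul_integral_Dinv_mul hf hg]
    ring
end
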